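/- Let π ∈ NC(k) with outer classes B_1(π), …, B_o(π) (o = o(π)), listed in increasing order of minimal elements. Let D = {σ ∈ NC(k) : σ ≥ π and, for each i, the closure of the i-th outer class of σ equals cl(B_i(π))} (every σ ∈ D then has exactly o outer classes B_1(σ), …, B_o(σ)). For ρ ∈ NC(o) and σ ∈ D, define f(ρ, σ) to be the relation on [k] given by: i ~ j iff i ~σ j, or i ∈ B_s(σ) and j ∈ B_t(σ) with s ~ρ t. Then f(ρ, σ) is a noncrossing partition of [k] with f(ρ, σ) ≥ π, and f : NC(o) × D → {τ ∈ NC(k) : τ ≥ π} is a bijection. -/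

import Mathlib

open scoped Classical

noncomputable section FreeStochasticMeasures

/-! ## Partitions of `Fin k` as setoids -/

instance setoidFinFinite (k : ℕ) : Finite (Setoid (Fin k)) :=
  Finite.of_injective (fun π : Setoid (Fin k) => (π.r : Fin k → Fin k → Prop))
    (fun _ _ hab => Setoid.ext fun x y => iff_of_eq (congrFun (congrFun hab x) y))

instance setoidFinFintype (k : ℕ) : Fintype (Setoid (Fin k)) := Fintype.ofFinite _

/-- The classes of a partition of `Fin k`, as a finset of finsets. -/
def classesF {k : ℕ} (π : Setoid (Fin k)) : Finset (Finset (Fin k)) :=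
  Finset.univ.image fun i => Finset.univ.filter fun j => π.r i j

/-- A partition `π` of `Fin k` is noncrossing: there are no `i < j < l < m` with
`i ~π l`, `j ~π m` and `¬ i ~π j`. -/
def IsNC {k : ℕ} (π : Setoid (Fin k)) : Prop :=
  ∀ i j l m : Fin k, i < j → j < l → l < m → π.r i l → π.r j m → π.r i j

/-- `B` is a class of the partition `π`. -/
def IsClass {k : ℕ} (π : Setoid (Fin k)) (B : Finset (Fin k)) : Prop :=
  B ∈ classesF π

/-- `B` is an inner class of `π`: it is covered by some other class. -/
def IsInnerClass {k : ℕ} (π : Setoid (Fin k)) (B : Finset (Fin k)) : Prop :=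
  IsClass π B ∧ ∃ B' : Finset (Fin k), IsClass π B' ∧ B' ≠ B ∧
    ∃ a ∈ B', ∃ b ∈ B', ∀ c ∈ B, a < c ∧ c < b

/-- `B` is an outer class of `π`: a class which is not inner. -/
def IsOuterClass {k : ℕ} (π : Setoid (Fin k)) (B : Finset (Fin k)) : Prop :=
  IsClass π B ∧ ¬ IsInnerClass π B

/-- `Bf` enumerates the finsets satisfying `P` (e.g. the outer classes of a partition),
listed in increasing order of minimal elements. -/
def ClassEnum {k o : ℕ} (P : Finset (Fin k) → Prop) (Bf : Fin o → Finset (Fin k)) : Prop :=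
  (∀ i, P (Bf i)) ∧ (∀ B, P B → ∃ i, Bf i = B) ∧
    ∀ i j : Fin o, i < j → ∃ a ∈ Bf i, ∀ b ∈ Bf j, a < b

/-- The closure of a class: all indices lying between two of its elements. -/
def closureF {k : ℕ} (B : Finset (Fin k)) : Finset (Fin k) :=
  Finset.univ.filter fun j => ∃ a ∈ B, ∃ b ∈ B, a ≤ j ∧ j ≤ b

/-- Restriction of a partition of `Fin k` to a subset `C`, transported to `Fin C.card`
along the unique order isomorphism. -/
def restrictS {k : ℕ} (π : Setoid (Fin k)) (C : Finset (Fin k)) : Setoid (Fin C.card) :=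
  Setoid.comap (fun i => (C.orderIsoOfFin rfl i).1) π

/-- `μ` is the Möbius function of the poset `NC(k)` of noncrossing partitions of `Fin k`:
determined by `μ σ σ = 1` and the vanishing of the sums over intervals. -/
def IsNCMobius (k : ℕ) (μ : Setoid (Fin k) → Setoid (Fin k) → ℤ) : Prop :=
  (∀ σ : Setoid (Fin k), IsNC σ → μ σ σ = 1) ∧
    ∀ σ π : Setoid (Fin k), IsNC σ → IsNC π → σ < π →
      (∑ ρ ∈ Finset.univ.filter (fun ρ : Setoid (Fin k) => IsNC ρ ∧ σ ≤ ρ ∧ ρ ≤ π), μ σ ρ) = 0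

/-- `μ` is the Möbius function of the lattice of all partitions of `Fin k`. -/
def IsPMobius (k : ℕ) (μ : Setoid (Fin k) → Setoid (Fin k) → ℤ) : Prop :=
  (∀ σ : Setoid (Fin k), μ σ σ = 1) ∧
    ∀ σ π : Setoid (Fin k), σ < π →
      (∑ ρ ∈ Finset.univ.filter (fun ρ : Setoid (Fin k) => σ ≤ ρ ∧ ρ ≤ π), μ σ ρ) = 0

/-! ## Partition-indexed sums in a ring -/

section RingSums

variable {R : Type*} [Ring R]

/-- `St_π(x)`: sum over all `v` inducing exactly the partition `π`. -/
def StSumR {k N : ℕ} (x : Fin k → Fin N → R) (π : Setoid (Fin k)) : R :=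
  ∑ v ∈ Finset.univ.filter (fun v : Fin k → Fin N => ∀ i j, v i = v j ↔ π.r i j),
    (List.ofFn fun i => x i (v i)).prod

/-- `Pr_π(x)`: sum over all `v` constant on the classes of `π`. -/
def PrSumR {k N : ℕ} (x : Fin k → Fin N → R) (π : Setoid (Fin k)) : R :=
  ∑ v ∈ Finset.univ.filter (fun v : Fin k → Fin N => ∀ i j, π.r i j → v i = v j),
    (List.ofFn fun i => x i (v i)).prod

/-- Restriction of the family `x` to the rows indexed by `C`, in increasing order. -/
def restrictT {k N : ℕ} (x : Fin k → Fin N → R) (C : Finset (Fin k)) :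
    Fin C.card → Fin N → R := fun i => x (C.orderIsoOfFin rfl i).1

end RingSums

/-! ## C*-probability spaces, states, free independence -/

variable {A : Type*} [NormedRing A] [StarRing A] [CStarRing A] [NormedAlgebra ℂ A]
  [StarModule ℂ A] [CompleteSpace A]

/-- `φ` is a state: unital and positive. -/
structure IsCState (φ : A →ₗ[ℂ] ℂ) : Prop where
  map_one : φ 1 = 1
  pos : ∀ a : A, 0 ≤ (φ (star a * a)).re ∧ (φ (star a * a)).im = 0

/-- `φ` is a faithful tracial state. -/
structure IsFaithfulTracialState (φ : A →ₗ[ℂ] ℂ) : Prop where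
  map_one : φ 1 = 1
  pos : ∀ a : A, 0 ≤ (φ (star a * a)).re ∧ (φ (star a * a)).im = 0
  tracial : ∀ a b : A, φ (a * b) = φ (b * a)
  faithful : ∀ a : A, φ (star a * a) = 0 → a = 0

/-- Free independence of a family of subsets of `A` with respect to `φ`: alternating products
of centered elements of the generated unital star subalgebras are centered. -/
def FreelyIndependent (φ : A →ₗ[ℂ] ℂ) {ι : Type*} (S : ι → Set A) : Prop :=
  ∀ (m : ℕ) (idx : Fin (m + 1) → ι) (a : Fin (m + 1) → A),
    (∀ t, a t ∈ StarAlgebra.adjoin ℂ (S (idx t))) →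
    (∀ t : Fin m, idx t.castSucc ≠ idx t.succ) →
    (∀ t, φ (a t) = 0) →
    φ (List.ofFn a).prod = 0

/-- Free independence of two sets. -/
def FreelyIndependentPair (φ : A →ₗ[ℂ] ℂ) (S T : Set A) : Prop :=
  FreelyIndependent φ (fun b : Bool => cond b S T)

/-- A standard semicircular element. -/
def IsStdSemicircular (φ : A →ₗ[ℂ] ℂ) (s : A) : Prop :=
  star s = s ∧ (∀ m : ℕ, φ (s ^ (2 * m + 1)) = 0) ∧
    ∀ m : ℕ, φ (s ^ (2 * m)) = (catalan m : ℂ)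

/-! ## Moments and free cumulants -/

/-- The moment of the subfamily of `a` indexed by `B`, in increasing order. -/
def Mom {k : ℕ} (φ : A →ₗ[ℂ] ℂ) (a : Fin k → A) (B : Finset (Fin k)) : ℂ :=
  φ ((B.sort (· ≤ ·)).map a).prod

/-- `M_π(a)`: product of the moments over the classes of `π`. -/
def MomPi {k : ℕ} (φ : A →ₗ[ℂ] ℂ) (a : Fin k → A) (π : Setoid (Fin k)) : ℂ :=
  ∏ B ∈ classesF π, Mom φ a B

/-- `R_π(a)`: the free cumulant functional, via Möbius inversion over `NC(k)`
(`μ` is the Möbius function of `NC(k)`). -/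
def Rpi {k : ℕ} (φ : A →ₗ[ℂ] ℂ) (μ : Setoid (Fin k) → Setoid (Fin k) → ℤ)
    (a : Fin k → A) (π : Setoid (Fin k)) : ℂ :=
  ∑ σ ∈ Finset.univ.filter (fun σ : Setoid (Fin k) => IsNC σ ∧ σ ≤ π),
    (μ σ π : ℂ) * MomPi φ a σ

/-- `R(a_1, …, a_k)`: the free cumulant for the one-class partition. -/
def Rfull {k : ℕ} (φ : A →ₗ[ℂ] ℂ) (μ : Setoid (Fin k) → Setoid (Fin k) → ℤ)
    (a : Fin k → A) : ℂ :=
  Rpi φ μ a ⊤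

/-- The subfamily of operators indexed by `B`, in increasing order. -/
def subArgs {k : ℕ} (a : Fin k → A) (B : Finset (Fin k)) : Fin B.card → A :=
  fun i => a (B.orderIsoOfFin rfl i).1

/-! ## Half-open subintervals of `[0,1)` and subdivisions -/

/-- A half-open interval `[lo, hi) ⊆ [0,1)`. -/
structure HIv : Type where
  lo : ℝ
  hi : ℝ
  lo_nonneg : 0 ≤ lo
  lo_le_hi : lo ≤ hi
  hi_le_one : hi ≤ 1

namespace HIv

/-- The length of a half-open interval. -/
def len (I : HIv) : ℝ := I.hi - I.lo

/-- A half-open interval as a set of reals. -/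
def set (I : HIv) : Set ℝ := Set.Ico I.lo I.hi

end HIv

/-- The interval `[0,1)`. -/
def unitIv : HIv := ⟨0, 1, le_refl 0, zero_le_one, le_refl 1⟩

/-- A subdivision of the half-open interval `I` into finitely many half-open intervals,
listed in increasing order, recorded by its strictly increasing sequence of cut points. -/
structure SubdivOf (I : HIv) : Type where
  n : ℕ
  c : Fin (n + 1) → ℝ
  mono : StrictMono c
  first : c 0 = I.lo
  last : c (Fin.last n) = I.hi

namespace SubdivOf

/-- The `j`-th interval of a subdivision. -/
def piece {I : HIv} (S : SubdivOf I) (j : Fin S.n) : HIv where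
  lo := S.c j.castSucc
  hi := S.c j.succ
  lo_nonneg := by
    have h0 : S.c 0 ≤ S.c j.castSucc := S.mono.monotone (Fin.zero_le _)
    have h1 := I.lo_nonneg
    rw [S.first] at h0; linarith
  lo_le_hi := le_of_lt (S.mono Fin.castSucc_lt_succ)
  hi_le_one := by
    have h0 : S.c j.succ ≤ S.c (Fin.last S.n) := S.mono.monotone (Fin.le_last _)
    have h1 := I.hi_le_one
    rw [S.last] at h0; linarith

/-- The mesh of the subdivision is `< δ`: every piece has length `< δ`. -/
def MeshLT {I : HIv} (S : SubdivOf I) (δ : ℝ) : Prop :=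
  ∀ j : Fin S.n, (S.piece j).len < δ

end SubdivOf

/-- `L` is the operator-norm limit of `F` along the net of subdivisions of `I`
(as the mesh tends to `0`). -/
def IsSubdivLimit {I : HIv} (F : SubdivOf I → A) (L : A) : Prop :=
  ∀ ε : ℝ, 0 < ε → ∃ δ : ℝ, 0 < δ ∧ ∀ S : SubdivOf I, S.MeshLT δ → ‖F S - L‖ < ε

/-! ## Free stochastic measures -/

/-- A free stochastic measure on `(A, φ)`: a self-adjoint, uniformly bounded, additive,
stationary, continuous interval function with freely independent values on disjoint
intervals. -/
structure FSM (A : Type*) [NormedRing A] [StarRing A] [CStarRing A] [NormedAlgebra ℂ A]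
    [StarModule ℂ A] [CompleteSpace A] (φ : A →ₗ[ℂ] ℂ) : Type _ where
  val : HIv → A
  sa : ∀ I, star (val I) = val I
  bdd : ∃ C : ℝ, ∀ I, ‖val I‖ ≤ C
  add : ∀ I J K : HIv, I.hi = J.lo → K.lo = I.lo → K.hi = J.hi → val K = val I + val J
  free : ∀ {n : ℕ} (Iv : Fin n → HIv),
    (∀ i j, i ≠ j → Disjoint (Iv i).set (Iv j).set) →
    FreelyIndependent φ fun i => ({val (Iv i)} : Set A)
  stat : ∀ (m : ℕ) (I J : HIv), I.len = J.len → φ (val I ^ m) = φ (val J ^ m)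
  cont : ∀ (m : ℕ) (I : HIv) (ε : ℝ), 0 < ε → ∃ δ : ℝ, 0 < δ ∧
    ∀ J : HIv, |J.len - I.len| < δ → ‖φ (val J ^ m) - φ (val I ^ m)‖ < ε

/-- A `k`-tuple of free stochastic measures is consistent: joint free increments,
joint stationarity, and joint continuity. -/
def Consistent {k : ℕ} (φ : A →ₗ[ℂ] ℂ) (X : Fin k → FSM A φ) : Prop :=
  (∀ (n : ℕ) (u : Fin n → Fin k) (Iv : Fin n → HIv),
      (∀ i j, i ≠ j → Disjoint (Iv i).set (Iv j).set) →
      FreelyIndependent φ fun i => ({(X (u i)).val (Iv i)} : Set A)) ∧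
  (∀ (n : ℕ) (u : Fin n → Fin k) (I J : HIv), I.len = J.len →
      φ (List.ofFn fun i => (X (u i)).val I).prod
        = φ (List.ofFn fun i => (X (u i)).val J).prod) ∧
  (∀ (n : ℕ) (u : Fin n → Fin k) (I : HIv) (ε : ℝ), 0 < ε → ∃ δ : ℝ, 0 < δ ∧
      ∀ J : HIv, |J.len - I.len| < δ →
        ‖φ (List.ofFn fun i => (X (u i)).val J).prod
          - φ (List.ofFn fun i => (X (u i)).val I).prod‖ < ε)

/-! ## Riemann-type sums for stochastic measures -/

/-- `St_π(X, S)`: sum over multi-indices inducing exactly the partition `π`. -/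
def StSum {k : ℕ} (Xv : Fin k → HIv → A) (π : Setoid (Fin k)) {I : HIv}
    (S : SubdivOf I) : A :=
  ∑ v ∈ Finset.univ.filter (fun v : Fin k → Fin S.n => ∀ i j, v i = v j ↔ π.r i j),
    (List.ofFn fun i => Xv i (S.piece (v i))).prod

/-- `Pr_π(X, S)`: sum over multi-indices constant on the classes of `π`. -/
def PrSum {k : ℕ} (Xv : Fin k → HIv → A) (π : Setoid (Fin k)) {I : HIv}
    (S : SubdivOf I) : A :=
  ∑ v ∈ Finset.univ.filter (fun v : Fin k → Fin S.n => ∀ i j, π.r i j → v i = v j),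
    (List.ofFn fun i => Xv i (S.piece (v i))).prod

/-- The diagonal Riemann sum `Σ_j X^{(1)}(I_j) ⋯ X^{(k)}(I_j)`. -/
def diagSum {k : ℕ} (Xv : Fin k → HIv → A) {I : HIv} (S : SubdivOf I) : A :=
  ∑ j : Fin S.n, (List.ofFn fun i => Xv i (S.piece j)).prod

/-- The sub-tuple of interval functions indexed by `B`, in increasing order. -/
def subTupleV {k : ℕ} (Xv : Fin k → HIv → A) (B : Finset (Fin k)) :
    Fin B.card → HIv → A := fun i => Xv (B.orderIsoOfFin rfl i).1

/-- The alternating product `p Z_1 p Z_2 p ⋯ Z_k p`. -/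
def altProd {k : ℕ} (p : A) (Z : Fin k → A) : A :=
  p * (List.ofFn fun j => Z j * p).prod

/-- Lengths of the intersection `∩_{i ∈ G} I_i` of half-open intervals. -/
def interLen {n : ℕ} (Iv : Fin n → HIv) (G : Finset (Fin n)) : ℝ :=
  if h : G.Nonempty then
    max 0 ((G.inf' h fun i => (Iv i).hi) - (G.sup' h fun i => (Iv i).lo))
  else 0

/-- A free Poisson stochastic measure: all free cumulants of `Y(I)` equal `|I|`
(`μ` is a family of Möbius functions of the posets `NC(n)`). -/
def IsFreePoisson (φ : A →ₗ[ℂ] ℂ) (Y : FSM A φ)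
    (μ : (n : ℕ) → Setoid (Fin n) → Setoid (Fin n) → ℤ) : Prop :=
  ∀ n : ℕ, 1 ≤ n → ∀ I : HIv, Rfull φ (μ n) (fun _ : Fin n => Y.val I) = (I.len : ℂ)

end FreeStochasticMeasures
/-- The relation defining `f(ρ, σ)`: `i ~ j` iff `i ~σ j`, or `i ∈ B_s(σ)`, `j ∈ B_t(σ)`
with `s ~ρ t`. -/
def GlueRel {k o : ℕ} (ρ : Setoid (Fin o)) (σ : Setoid (Fin k))
    (Bσ : Fin o → Finset (Fin k)) (i j : Fin k) : Prop :=
  σ.r i j ∨ ∃ s t : Fin o, i ∈ Bσ s ∧ j ∈ Bσ t ∧ ρ.r s t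

/-- Membership of `σ` (with its enumeration `Bσ` of outer classes in increasing order of
minimal elements) in the set `D`: `σ` is noncrossing, `σ ≥ π`, and for each `i` the closure
of the `i`-th outer class of `σ` equals `cl(B_i(π))`. -/
def InD {k o : ℕ} (π : Setoid (Fin k)) (Bf : Fin o → Finset (Fin k))
    (σ : Setoid (Fin k)) (Bσ : Fin o → Finset (Fin k)) : Prop :=
  IsNC σ ∧ π ≤ σ ∧ ClassEnum (IsOuterClass σ) Bσ ∧
    ∀ i : Fin o, closureF (Bσ i) = closureF (Bf i)

/-!
The closures of the outer classes of a noncrossing partition are disjoint intervals covering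
`[k]`, listed from left to right, and a class passing over a point of an outer class contains
that point; so gluing outer classes of `σ` along a noncrossing `ρ` creates no crossing.
Conversely, cut a noncrossing `τ ≥ π` along the intervals `cl(B_t(π))` to get `σ`. The two
ends of such an interval are `π`-related, hence `τ`-related, so a `τ`-class leaving the
interval contains its left end. Thus `τ` is `σ` glued along the partition `ρ` that `τ` induces
on the left ends, and the `σ`-classes of the left ends are the outer classes of `σ`.
Injectivity: `σ` is `f(ρ, σ)` cut along the same intervals, and `ρ` is read off from the
outer classes of `σ`.
-/

open Finset

noncomputable def classOf {k : ℕ} (σ : Setoid (Fin k)) (i : Fin k) : Finset (Fin k) :=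
  univ.filter fun j => σ.r i j

section Classes

variable {k : ℕ} {σ : Setoid (Fin k)} {B B' : Finset (Fin k)} {i j : Fin k}

@[simp]
lemma mem_classOf : j ∈ classOf σ i ↔ σ.r i j := by
  simp [classOf]

lemma mem_classOf_self (σ : Setoid (Fin k)) (i : Fin k) : i ∈ classOf σ i :=
  mem_classOf.2 (σ.iseqv.refl i)

lemma isClass_classOf (σ : Setoid (Fin k)) (i : Fin k) : IsClass σ (classOf σ i) :=
  mem_image.2 ⟨i, mem_univ i, rfl⟩

namespace IsClass

lemma exists_eq_classOf (hB : IsClass σ B) : ∃ i, classOf σ i = B := by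
  simpa [IsClass, classesF, classOf] using hB

lemma rel (hB : IsClass σ B) (hi : i ∈ B) (hj : j ∈ B) : σ.r i j := by
  obtain ⟨a, rfl⟩ := hB.exists_eq_classOf
  exact σ.iseqv.trans (σ.iseqv.symm (mem_classOf.1 hi)) (mem_classOf.1 hj)

lemma mem_of_rel (hB : IsClass σ B) (hi : i ∈ B) (hij : σ.r i j) : j ∈ B := by
  obtain ⟨a, rfl⟩ := hB.exists_eq_classOf
  exact mem_classOf.2 (σ.iseqv.trans (mem_classOf.1 hi) hij)

lemma eq_classOf (hB : IsClass σ B) (hi : i ∈ B) : B = classOf σ i := by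
  ext j
  exact ⟨fun hj => mem_classOf.2 (hB.rel hi hj), fun hj => hB.mem_of_rel hi (mem_classOf.1 hj)⟩

lemma eq_of_mem (hB : IsClass σ B) (hB' : IsClass σ B') (hi : i ∈ B) (hi' : i ∈ B') :
    B = B' :=
  (hB.eq_classOf hi).trans (hB'.eq_classOf hi').symm

lemma nonempty (hB : IsClass σ B) : B.Nonempty := by
  obtain ⟨a, rfl⟩ := hB.exists_eq_classOf
  exact ⟨a, mem_classOf_self σ a⟩

end IsClass

end Classes

section Closure

variable {k : ℕ} {B X : Finset (Fin k)} {j : Fin k}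

lemma mem_closureF : j ∈ closureF B ↔ ∃ a ∈ B, ∃ b ∈ B, a ≤ j ∧ j ≤ b := by
  simp [closureF]

lemma subset_closureF (B : Finset (Fin k)) : B ⊆ closureF B :=
  fun x hx => mem_closureF.2 ⟨x, hx, x, hx, le_rfl, le_rfl⟩

lemma mem_closureF_iff (h : B.Nonempty) : j ∈ closureF B ↔ B.min' h ≤ j ∧ j ≤ B.max' h := by
  rw [mem_closureF]
  constructor
  · rintro ⟨a, ha, b, hb, haj, hjb⟩
    exact ⟨(min'_le B a ha).trans haj, hjb.trans (le_max' B b hb)⟩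
  · rintro ⟨hmin, hmax⟩
    exact ⟨_, min'_mem B h, _, max'_mem B h, hmin, hmax⟩

lemma closureF_subset_closureF (h : B ⊆ closureF X) : closureF B ⊆ closureF X := by
  intro j hj
  obtain ⟨a, ha, b, hb, haj, hjb⟩ := mem_closureF.1 hj
  obtain ⟨a', ha', -, -, ha'a, -⟩ := mem_closureF.1 (h ha)
  obtain ⟨-, -, b', hb', -, hbb'⟩ := mem_closureF.1 (h hb)
  exact mem_closureF.2 ⟨a', ha', b', hb', ha'a.trans haj, hjb.trans hbb'⟩

lemma IsClass.exists_isOuterClass_subset_closureF {σ : Setoid (Fin k)} {C : Finset (Fin k)}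
    (hC : IsClass σ C) :
    ∃ B, IsOuterClass σ B ∧ C ⊆ closureF B := by
  -- a class whose closure contains `C` and is as large as possible is outer
  obtain ⟨B, hB, hmax⟩ := ((classesF σ).filter (C ⊆ closureF ·)).exists_max_image
    (fun B => #(closureF B)) ⟨C, mem_filter.2 ⟨hC, subset_closureF C⟩⟩
  rw [mem_filter] at hB
  refine ⟨B, ⟨hB.1, ?_⟩, hB.2⟩
  rintro ⟨-, B', hB', -, a, ha, b, hb, hcov⟩
  have hBB' : B ⊆ closureF B' := fun c hc =>
    mem_closureF.2 ⟨a, ha, b, hb, (hcov c hc).1.le, (hcov c hc).2.le⟩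
  have ha_notMem : a ∉ closureF B := fun h => by
    obtain ⟨x, hx, -, -, hxa, -⟩ := mem_closureF.1 h
    exact (hcov x hx).1.not_ge hxa
  have hlt : closureF B ⊂ closureF B' := (ssubset_iff_of_subset (closureF_subset_closureF hBB')).2
    ⟨a, subset_closureF B' ha, ha_notMem⟩
  exact (card_lt_card hlt).not_ge (hmax B' (mem_filter.2
    ⟨hB', hB.2.trans (closureF_subset_closureF hBB')⟩))

end Closure

namespace IsNC

variable {k : ℕ} {σ : Setoid (Fin k)} {B B' : Finset (Fin k)}

lemma rel_of_le (hσ : IsNC σ) {i j l m : Fin k} (hij : i ≤ j) (hjl : j ≤ l) (hlm : l ≤ m)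
    (hil : σ.r i l) (hjm : σ.r j m) : σ.r i j := by
  rcases hij.eq_or_lt with rfl | hij
  · exact σ.iseqv.refl i
  rcases hjl.eq_or_lt with rfl | hjl
  · exact hil
  rcases hlm.eq_or_lt with rfl | hlm
  · exact σ.iseqv.trans hil (σ.iseqv.symm hjm)
  exact hσ i j l m hij hjl hlm hil hjm

lemma rel_left_of_rel_outside (hσ : IsNC σ) {a b i j : Fin k} (hab : σ.r a b) (hai : a ≤ i)
    (hib : i ≤ b) (hij : σ.r i j) (hj : j < a ∨ b < j) : σ.r a i := by
  rcases hj with hja | hbj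
  · have hja' : σ.r j a := hσ.rel_of_le hja.le hai hib (σ.iseqv.symm hij) hab
    exact σ.iseqv.trans (σ.iseqv.symm hja') (σ.iseqv.symm hij)
  · exact hσ.rel_of_le hai hib hbj.le hab hij

lemma rel_of_mem_outer (hσ : IsNC σ) (hB : IsOuterClass σ B) {i j l : Fin k} (hj : j ∈ B)
    (hij : i < j) (hjl : j < l) (hil : σ.r i l) : σ.r i j := by
  by_cases hout : ∃ m ∈ B, m ≤ i ∨ l ≤ m
  · obtain ⟨m, hm, hmi | hlm⟩ := hout
    · have hmi' : σ.r m i := hσ.rel_of_le hmi hij.le hjl.le (hB.1.rel hm hj) hil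
      exact σ.iseqv.trans (σ.iseqv.symm hmi') (hB.1.rel hm hj)
    · exact hσ.rel_of_le hij.le hjl.le hlm hil (hB.1.rel hj hm)
  · -- otherwise the class of `i` would pass over all of `B`
    push Not at hout
    refine absurd ⟨hB.1, classOf σ i, isClass_classOf σ i, fun h => ?_, i, mem_classOf_self σ i,
      l, mem_classOf.2 hil, hout⟩ hB.2
    exact lt_irrefl i (hout i (h ▸ mem_classOf_self σ i)).1

lemma max'_lt_min' (hσ : IsNC σ) (hB : IsClass σ B) (hB' : IsOuterClass σ B') (hne : B ≠ B')
    (hBn : B.Nonempty) (hB'n : B'.Nonempty) (hmin : B.min' hBn < B'.min' hB'n) :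
    B.max' hBn < B'.min' hB'n := by
  by_contra! hle
  rcases le_or_gt (B.max' hBn) (B'.max' hB'n) with hmax | hmax
  · have hrel := hσ.rel_of_le hmin.le hle hmax (hB.rel (min'_mem B hBn) (max'_mem B hBn))
      (hB'.1.rel (min'_mem B' hB'n) (max'_mem B' hB'n))
    exact hne (hB.eq_of_mem hB'.1 (hB.mem_of_rel (min'_mem B hBn) hrel) (min'_mem B' hB'n))
  · exact hB'.2 ⟨hB'.1, B, hB, hne, _, min'_mem B hBn, _, max'_mem B hBn,
      fun c hc => ⟨hmin.trans_le (min'_le B' c hc), (le_max' B' c hc).trans_lt hmax⟩⟩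

lemma inf_ker {β : Type*} [PartialOrder β] (hσ : IsNC σ) {c : Fin k → β} (hc : Monotone c) :
    IsNC (σ ⊓ Setoid.ker c) := by
  rintro i j l m hij hjl hlm ⟨hil, hcil⟩ ⟨hjm, -⟩
  exact ⟨hσ i j l m hij hjl hlm hil hjm,
    le_antisymm (hc hij.le) ((hc hjl.le).trans (le_of_eq (Setoid.ker_def.1 hcil).symm))⟩

lemma comap {o : ℕ} (hσ : IsNC σ) {m : Fin o → Fin k} (hm : StrictMono m) :
    IsNC (Setoid.comap m σ) :=
  fun _ _ _ _ hij hjl hlm => hσ _ _ _ _ (hm hij) (hm hjl) (hm hlm)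

end IsNC

namespace ClassEnum

variable {k o : ℕ} {σ : Setoid (Fin k)} {Bσ : Fin o → Finset (Fin k)} {s t : Fin o}
  {x y : Fin k}

lemma injective {P : Finset (Fin k) → Prop} (hE : ClassEnum P Bσ) : Function.Injective Bσ := by
  intro s t h
  by_contra hne
  rcases lt_or_gt_of_ne hne with hst | hts
  · obtain ⟨a, ha, hab⟩ := hE.2.2 s t hst
    exact lt_irrefl a (hab a (h ▸ ha))
  · obtain ⟨a, ha, hab⟩ := hE.2.2 t s hts
    exact lt_irrefl a (hab a (h ▸ ha))

lemma eq_of_mem (hE : ClassEnum (IsOuterClass σ) Bσ) (hs : x ∈ Bσ s) (ht : x ∈ Bσ t) : s = t :=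
  hE.injective ((hE.1 s).1.eq_of_mem (hE.1 t).1 hs ht)

lemma lt_of_mem_closureF (hσ : IsNC σ) (hE : ClassEnum (IsOuterClass σ) Bσ) (hst : s < t)
    (hx : x ∈ closureF (Bσ s)) (hy : y ∈ closureF (Bσ t)) : x < y := by
  have hs := (hE.1 s).1.nonempty
  have ht := (hE.1 t).1.nonempty
  obtain ⟨a, ha, hab⟩ := hE.2.2 s t hst
  have hmin : (Bσ s).min' hs < (Bσ t).min' ht := (min'_le _ a ha).trans_lt (hab _ (min'_mem _ ht))
  rw [mem_closureF_iff hs] at hx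
  rw [mem_closureF_iff ht] at hy
  exact hx.2.trans_lt ((hσ.max'_lt_min' (hE.1 s).1 (hE.1 t) (hE.injective.ne hst.ne) hs ht
    hmin).trans_le hy.1)

lemma le_of_mem_closureF (hσ : IsNC σ) (hE : ClassEnum (IsOuterClass σ) Bσ)
    (hx : x ∈ closureF (Bσ s)) (hy : y ∈ closureF (Bσ t)) (hxy : x ≤ y) : s ≤ t :=
  le_of_not_gt fun hts => (hE.lt_of_mem_closureF hσ hts hy hx).not_ge hxy

lemma eq_of_mem_closureF (hσ : IsNC σ) (hE : ClassEnum (IsOuterClass σ) Bσ)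
    (hs : x ∈ closureF (Bσ s)) (ht : x ∈ closureF (Bσ t)) : s = t :=
  le_antisymm (hE.le_of_mem_closureF hσ hs ht le_rfl) (hE.le_of_mem_closureF hσ ht hs le_rfl)

lemma exists_subset_closureF (hE : ClassEnum (IsOuterClass σ) Bσ)
    {C : Finset (Fin k)} (hC : IsClass σ C) : ∃ t, C ⊆ closureF (Bσ t) := by
  obtain ⟨B, hB, hCB⟩ := hC.exists_isOuterClass_subset_closureF
  obtain ⟨t, rfl⟩ := hE.2.1 B hB
  exact ⟨t, hCB⟩

lemma exists_mem_closureF (hE : ClassEnum (IsOuterClass σ) Bσ) (x : Fin k) :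
    ∃ t, x ∈ closureF (Bσ t) :=
  (hE.exists_subset_closureF (isClass_classOf σ x)).imp fun _ ht => ht (mem_classOf_self σ x)

lemma exists_strictMono_reindex (hσ : IsNC σ) {B₁ B₂ : Fin o → Finset (Fin k)}
    (h₁ : ClassEnum (IsOuterClass σ) B₁) (h₂ : ClassEnum (IsOuterClass σ) B₂) :
    ∃ g : Fin o → Fin o, StrictMono g ∧ ∀ i, B₂ (g i) = B₁ i := by
  choose g hg using fun i => h₂.2.1 _ (h₁.1 i)
  refine ⟨g, fun i j hij => ?_, hg⟩
  obtain ⟨x, hx⟩ := (h₁.1 i).1.nonempty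
  obtain ⟨y, hy⟩ := (h₁.1 j).1.nonempty
  have hxy := h₁.lt_of_mem_closureF hσ hij (subset_closureF _ hx) (subset_closureF _ hy)
  rw [← hg] at hx hy
  refine (h₂.le_of_mem_closureF hσ (subset_closureF _ hx) (subset_closureF _ hy) hxy.le).lt_of_ne
    fun he => hij.ne (h₁.injective ?_)
  rw [← hg, ← hg, he]

lemma unique (hσ : IsNC σ) {B₁ B₂ : Fin o → Finset (Fin k)}
    (h₁ : ClassEnum (IsOuterClass σ) B₁) (h₂ : ClassEnum (IsOuterClass σ) B₂) : B₁ = B₂ := by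
  obtain ⟨g, hg, hgB⟩ := exists_strictMono_reindex hσ h₁ h₂
  obtain ⟨g', hg', hg'B⟩ := exists_strictMono_reindex hσ h₂ h₁
  have hg'g (i : Fin o) : g' (g i) = i := h₁.injective (by rw [hg'B, hgB])
  funext i
  have hgi : g i = i := le_antisymm (by simpa [hg'g] using hg'.le_apply (x := g i)) hg.le_apply
  rw [← hgB, hgi]

end ClassEnum

section Glue

variable {k o : ℕ} {ρ ρ₁ ρ₂ : Setoid (Fin o)} {π σ σ₁ σ₂ τ : Setoid (Fin k)}
  {Bf Bσ Bσ₁ Bσ₂ : Fin o → Finset (Fin k)}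

lemma glueRel_equivalence (hE : ClassEnum (IsOuterClass σ) Bσ) :
    Equivalence (GlueRel ρ σ Bσ) where
  refl i := Or.inl (σ.iseqv.refl i)
  symm := by
    rintro i j (h | ⟨s, t, hi, hj, hst⟩)
    · exact Or.inl (σ.iseqv.symm h)
    · exact Or.inr ⟨t, s, hj, hi, ρ.iseqv.symm hst⟩
  trans := by
    rintro i j l (hij | ⟨s, t, hi, hj, hst⟩) (hjl | ⟨s', t', hj', hl, hst'⟩)
    · exact Or.inl (σ.iseqv.trans hij hjl)
    · exact Or.inr ⟨s', t', (hE.1 s').1.mem_of_rel hj' (σ.iseqv.symm hij), hl, hst'⟩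
    · exact Or.inr ⟨s, t, hi, (hE.1 t).1.mem_of_rel hj hjl, hst⟩
    · obtain rfl := hE.eq_of_mem hj hj'
      exact Or.inr ⟨s, t', hi, hl, ρ.iseqv.trans hst hst'⟩

def glue (ρ : Setoid (Fin o)) (σ : Setoid (Fin k)) (Bσ : Fin o → Finset (Fin k))
    (hE : ClassEnum (IsOuterClass σ) Bσ) : Setoid (Fin k) :=
  ⟨GlueRel ρ σ Bσ, glueRel_equivalence hE⟩

lemma isNC_glue (hρ : IsNC ρ) (hσ : IsNC σ) (hE : ClassEnum (IsOuterClass σ) Bσ) :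
    IsNC (glue ρ σ Bσ hE) := by
  have index_le {x y : Fin k} {s t : Fin o} (hx : x ∈ Bσ s) (hy : y ∈ Bσ t) (hxy : x < y) :
      s ≤ t :=
    hE.le_of_mem_closureF hσ (subset_closureF _ hx) (subset_closureF _ hy) hxy.le
  rintro i j l m hij hjl hlm (hil | ⟨s, t, hi, hl, hst⟩) (hjm | ⟨u, w, hj, hm, huw⟩)
  · exact Or.inl (hσ i j l m hij hjl hlm hil hjm)
  · exact Or.inl (hσ.rel_of_mem_outer (hE.1 u) hj hij hjl hil)
  · have hjl' := hσ.rel_of_mem_outer (hE.1 t) hl hjl hlm hjm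
    exact Or.inr ⟨s, t, hi, (hE.1 t).1.mem_of_rel hl (σ.iseqv.symm hjl'), hst⟩
  · exact Or.inr ⟨s, u, hi, hj, hρ.rel_of_le (index_le hi hj hij) (index_le hj hl hjl)
      (index_le hl hm hlm) hst huw⟩

lemma le_glue (hπσ : π ≤ σ) (hE : ClassEnum (IsOuterClass σ) Bσ) : π ≤ glue ρ σ Bσ hE :=
  fun _ _ h => Or.inl (hπσ h)

lemma glueRel_iff_of_mem (hE : ClassEnum (IsOuterClass σ) Bσ) {x y : Fin k} {s t : Fin o}
    (hx : x ∈ Bσ s) (hy : y ∈ Bσ t) : GlueRel ρ σ Bσ x y ↔ ρ.r s t := by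
  refine ⟨?_, fun h => Or.inr ⟨s, t, hx, hy, h⟩⟩
  rintro (h | ⟨s', t', hx', hy', h⟩)
  · obtain rfl := hE.eq_of_mem ((hE.1 s).1.mem_of_rel hx h) hy
    exact ρ.iseqv.refl s
  · rwa [hE.eq_of_mem hx hx', hE.eq_of_mem hy hy']

lemma rel_iff_glueRel_and_mem_closureF (hπ : IsNC π) (hBf : ClassEnum (IsOuterClass π) Bf)
    (hD : InD π Bf σ Bσ) {i j : Fin k} :
    σ.r i j ↔ GlueRel ρ σ Bσ i j ∧ ∃ t, i ∈ closureF (Bf t) ∧ j ∈ closureF (Bf t) := by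
  obtain ⟨-, -, hE, hcl⟩ := hD
  constructor
  · intro hij
    obtain ⟨t, ht⟩ := hE.exists_subset_closureF (isClass_classOf σ i)
    rw [hcl t] at ht
    exact ⟨Or.inl hij, t, ht (mem_classOf_self σ i), ht (mem_classOf.2 hij)⟩
  · rintro ⟨h | ⟨s, s', hi, hj, -⟩, t, hit, hjt⟩
    · exact h
    · have hi' : i ∈ closureF (Bf s) := hcl s ▸ subset_closureF _ hi
      have hj' : j ∈ closureF (Bf s') := hcl s' ▸ subset_closureF _ hj
      obtain rfl := hBf.eq_of_mem_closureF hπ hi' hit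
      obtain rfl := hBf.eq_of_mem_closureF hπ hj' hjt
      exact (hE.1 _).1.rel hi hj

lemma glue_injective (hπ : IsNC π) (hBf : ClassEnum (IsOuterClass π) Bf)
    (hD₁ : InD π Bf σ₁ Bσ₁) (hD₂ : InD π Bf σ₂ Bσ₂)
    (h₁ : ∀ i j, τ.r i j ↔ GlueRel ρ₁ σ₁ Bσ₁ i j) (h₂ : ∀ i j, τ.r i j ↔ GlueRel ρ₂ σ₂ Bσ₂ i j) :
    ρ₁ = ρ₂ ∧ σ₁ = σ₂ := by
  obtain rfl : σ₁ = σ₂ := Setoid.ext fun i j => by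
    rw [rel_iff_glueRel_and_mem_closureF hπ hBf hD₁, rel_iff_glueRel_and_mem_closureF hπ hBf hD₂,
      ← h₁, ← h₂]
  have hE := hD₁.2.2.1
  obtain rfl : Bσ₁ = Bσ₂ := hE.unique hD₁.1 hD₂.2.2.1
  refine ⟨Setoid.ext fun s t => ?_, rfl⟩
  obtain ⟨x, hx⟩ := (hE.1 s).1.nonempty
  obtain ⟨y, hy⟩ := (hE.1 t).1.nonempty
  rw [← glueRel_iff_of_mem hE hx hy, ← glueRel_iff_of_mem hE hx hy, ← h₁, ← h₂]

end Glue

namespace IntervalBlocks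

/- `c` numbers the blocks of a partition of `Fin k` into consecutive intervals `[m t, M t]`. -/

variable {k o : ℕ} {τ : Setoid (Fin k)} {c : Fin k → Fin o} {m M : Fin o → Fin k}

lemma apply_left_eq (hfib : ∀ x t, c x = t ↔ m t ≤ x ∧ x ≤ M t) (hmM : ∀ t, m t ≤ M t)
    (t : Fin o) : c (m t) = t :=
  (hfib _ _).2 ⟨le_rfl, hmM t⟩

lemma apply_right_eq (hfib : ∀ x t, c x = t ↔ m t ≤ x ∧ x ≤ M t) (hmM : ∀ t, m t ≤ M t)
    (t : Fin o) : c (M t) = t :=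
  (hfib _ _).2 ⟨hmM t, le_rfl⟩

lemma strictMono_left (hc : Monotone c) (hfib : ∀ x t, c x = t ↔ m t ≤ x ∧ x ≤ M t)
    (hmM : ∀ t, m t ≤ M t) : StrictMono m :=
  fun s t hst => hc.reflect_lt (by rwa [apply_left_eq hfib hmM, apply_left_eq hfib hmM])

lemma mem_classOf_inf_ker (hfib : ∀ x t, c x = t ↔ m t ≤ x ∧ x ≤ M t) (hmM : ∀ t, m t ≤ M t)
    {t : Fin o} {x : Fin k} :
    x ∈ classOf (τ ⊓ Setoid.ker c) (m t) ↔ τ.r (m t) x ∧ c x = t := by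
  rw [mem_classOf]
  change τ.r (m t) x ∧ c (m t) = c x ↔ _
  rw [apply_left_eq hfib hmM t, eq_comm]

lemma right_mem_classOf_inf_ker (hfib : ∀ x t, c x = t ↔ m t ≤ x ∧ x ≤ M t)
    (hmM : ∀ t, m t ≤ M t) (hτ : ∀ t, τ.r (m t) (M t)) (t : Fin o) :
    M t ∈ classOf (τ ⊓ Setoid.ker c) (m t) :=
  (mem_classOf_inf_ker hfib hmM).2 ⟨hτ t, apply_right_eq hfib hmM t⟩

lemma rel_left_of_apply_ne (hτNC : IsNC τ) (hfib : ∀ x t, c x = t ↔ m t ≤ x ∧ x ≤ M t)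
    (hτ : ∀ t, τ.r (m t) (M t)) {i j : Fin k} (hij : τ.r i j) (hne : c i ≠ c j) :
    τ.r (m (c i)) i := by
  obtain ⟨hmi, hiM⟩ := (hfib i (c i)).1 rfl
  have hj : j < m (c i) ∨ M (c i) < j := by
    by_contra! h
    exact hne ((hfib j (c i)).2 h).symm
  exact hτNC.rel_left_of_rel_outside (hτ (c i)) hmi hiM hij hj

lemma rel_iff_glueRel_inf_ker (hτNC : IsNC τ) (hfib : ∀ x t, c x = t ↔ m t ≤ x ∧ x ≤ M t)
    (hmM : ∀ t, m t ≤ M t) (hτ : ∀ t, τ.r (m t) (M t)) (i j : Fin k) :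
    τ.r i j ↔ GlueRel (Setoid.comap m τ) (τ ⊓ Setoid.ker c)
      (fun t => classOf (τ ⊓ Setoid.ker c) (m t)) i j := by
  constructor
  · intro hij
    by_cases hcij : c i = c j
    · exact Or.inl ⟨hij, hcij⟩
    have hi := rel_left_of_apply_ne hτNC hfib hτ hij hcij
    have hj := rel_left_of_apply_ne hτNC hfib hτ (τ.iseqv.symm hij) (Ne.symm hcij)
    exact Or.inr ⟨c i, c j, (mem_classOf_inf_ker hfib hmM).2 ⟨hi, rfl⟩,
      (mem_classOf_inf_ker hfib hmM).2 ⟨hj, rfl⟩,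
      τ.iseqv.trans (τ.iseqv.trans hi hij) (τ.iseqv.symm hj)⟩
  · rintro (h | ⟨s, t, hi, hj, hst⟩)
    · exact h.1
    · exact τ.iseqv.trans (τ.iseqv.trans (τ.iseqv.symm ((mem_classOf_inf_ker hfib hmM).1 hi).1)
        hst) ((mem_classOf_inf_ker hfib hmM).1 hj).1

lemma isOuterClass_classOf_inf_ker (hc : Monotone c)
    (hfib : ∀ x t, c x = t ↔ m t ≤ x ∧ x ≤ M t) (hmM : ∀ t, m t ≤ M t)
    (hτ : ∀ t, τ.r (m t) (M t)) (t : Fin o) :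
    IsOuterClass (τ ⊓ Setoid.ker c) (classOf (τ ⊓ Setoid.ker c) (m t)) := by
  refine ⟨isClass_classOf _ _, ?_⟩
  rintro ⟨-, B', hB', -, a, ha, b, hb, hcov⟩
  have ham : a < m t := (hcov _ (mem_classOf_self _ _)).1
  have hMb : M t < b := (hcov _ (right_mem_classOf_inf_ker hfib hmM hτ t)).2
  have hab : c a = c b := (hB'.rel ha hb).2
  have hca : c a = t := le_antisymm ((hc ham.le).trans_eq (apply_left_eq hfib hmM t))
    (((apply_right_eq hfib hmM t).symm.trans_le (hc hMb.le)).trans_eq hab.symm)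
  exact ham.not_ge ((hfib a t).1 hca).1

lemma exists_classOf_inf_ker_eq (hfib : ∀ x t, c x = t ↔ m t ≤ x ∧ x ≤ M t)
    (hmM : ∀ t, m t ≤ M t) (hτ : ∀ t, τ.r (m t) (M t)) {B : Finset (Fin k)}
    (hB : IsOuterClass (τ ⊓ Setoid.ker c) B) : ∃ t, classOf (τ ⊓ Setoid.ker c) (m t) = B := by
  obtain ⟨x, hx⟩ := hB.1.nonempty
  refine ⟨c x, by_contra fun hne => hB.2 ⟨hB.1, _, isClass_classOf _ _, hne, m (c x),
    mem_classOf_self _ _, M (c x), right_mem_classOf_inf_ker hfib hmM hτ (c x), fun y hy => ?_⟩⟩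
  have hmB : m (c x) ∉ B := fun h => hne (hB.1.eq_classOf h).symm
  have hMB : M (c x) ∉ B := fun h => hne (((isClass_classOf _ _).eq_classOf
    (right_mem_classOf_inf_ker hfib hmM hτ (c x))).trans (hB.1.eq_classOf h).symm)
  obtain ⟨hmy, hyM⟩ := (hfib y (c x)).1 (hB.1.rel hx hy).2.symm
  exact ⟨hmy.lt_of_ne fun h => hmB (h ▸ hy), hyM.lt_of_ne fun h => hMB (h ▸ hy)⟩

lemma classEnum_inf_ker (hc : Monotone c) (hfib : ∀ x t, c x = t ↔ m t ≤ x ∧ x ≤ M t)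
    (hmM : ∀ t, m t ≤ M t) (hτ : ∀ t, τ.r (m t) (M t)) :
    ClassEnum (IsOuterClass (τ ⊓ Setoid.ker c)) fun t => classOf (τ ⊓ Setoid.ker c) (m t) := by
  refine ⟨isOuterClass_classOf_inf_ker hc hfib hmM hτ, fun B hB =>
    exists_classOf_inf_ker_eq hfib hmM hτ hB, fun s t hst => ⟨m s, mem_classOf_self _ _,
    fun b hb => ?_⟩⟩
  exact (strictMono_left hc hfib hmM hst).trans_le
    ((hfib b t).1 ((mem_classOf_inf_ker hfib hmM).1 hb).2).1

lemma mem_closureF_classOf_inf_ker (hfib : ∀ x t, c x = t ↔ m t ≤ x ∧ x ≤ M t)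
    (hmM : ∀ t, m t ≤ M t) (hτ : ∀ t, τ.r (m t) (M t)) {t : Fin o} {x : Fin k} :
    x ∈ closureF (classOf (τ ⊓ Setoid.ker c) (m t)) ↔ c x = t := by
  rw [hfib, mem_closureF]
  constructor
  · rintro ⟨a, ha, b, hb, hax, hxb⟩
    exact ⟨((hfib a t).1 ((mem_classOf_inf_ker hfib hmM).1 ha).2).1.trans hax,
      hxb.trans ((hfib b t).1 ((mem_classOf_inf_ker hfib hmM).1 hb).2).2⟩
  · rintro ⟨hmx, hxM⟩
    exact ⟨m t, mem_classOf_self _ _, M t, right_mem_classOf_inf_ker hfib hmM hτ t, hmx, hxM⟩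

end IntervalBlocks

open IntervalBlocks in
lemma exists_glueRel_eq {k o : ℕ} {π τ : Setoid (Fin k)} {Bf : Fin o → Finset (Fin k)}
    (hπ : IsNC π) (hBf : ClassEnum (IsOuterClass π) Bf) (hτ : IsNC τ) (hπτ : π ≤ τ) :
    ∃ (ρ : Setoid (Fin o)) (σ : Setoid (Fin k)) (Bσ : Fin o → Finset (Fin k)),
      IsNC ρ ∧ InD π Bf σ Bσ ∧ ∀ i j, τ.r i j ↔ GlueRel ρ σ Bσ i j := by
  choose c hc using hBf.exists_mem_closureF
  have hne t : (Bf t).Nonempty := (hBf.1 t).1.nonempty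
  have hcl {x t} (h : x ∈ closureF (Bf t)) : c x = t := hBf.eq_of_mem_closureF hπ (hc x) h
  have hfib x t : c x = t ↔ (Bf t).min' (hne t) ≤ x ∧ x ≤ (Bf t).max' (hne t) := by
    rw [← mem_closureF_iff]
    exact ⟨fun h => h ▸ hc x, hcl⟩
  have hmono : Monotone c := fun x y hxy => hBf.le_of_mem_closureF hπ (hc x) (hc y) hxy
  have hmM t := min'_le_max' (Bf t) (hne t)
  have hτmM t : τ.r ((Bf t).min' (hne t)) ((Bf t).max' (hne t)) :=
    hπτ ((hBf.1 t).1.rel (min'_mem _ _) (max'_mem _ _))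
  have hπc : π ≤ Setoid.ker c := fun x y hxy => by
    obtain ⟨t, ht⟩ := hBf.exists_subset_closureF (isClass_classOf π x)
    exact (hcl (ht (mem_classOf_self π x))).trans (hcl (ht (mem_classOf.2 hxy))).symm
  refine ⟨_, _, _, hτ.comap (strictMono_left hmono hfib hmM),
    ⟨hτ.inf_ker hmono, le_inf hπτ hπc, classEnum_inf_ker hmono hfib hmM hτmM, fun t => ?_⟩,
    rel_iff_glueRel_inf_ker hτ hfib hmM hτmM⟩
  ext x
  rw [mem_closureF_classOf_inf_ker hfib hmM hτmM, hfib, mem_closureF_iff]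

theorem glue_bijection_general
    (k o : ℕ) (π : Setoid (Fin k)) (hπ : IsNC π)
    (Bf : Fin o → Finset (Fin k)) (hBf : ClassEnum (IsOuterClass π) Bf) :
    (∀ (ρ : Setoid (Fin o)) (σ : Setoid (Fin k)) (Bσ : Fin o → Finset (Fin k)),
        IsNC ρ → InD π Bf σ Bσ →
        ∃ τ : Setoid (Fin k),
          (∀ i j, τ.r i j ↔ GlueRel ρ σ Bσ i j) ∧ IsNC τ ∧ π ≤ τ) ∧
    (∀ (ρ₁ ρ₂ : Setoid (Fin o)) (σ₁ σ₂ τ : Setoid (Fin k))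
        (Bσ₁ Bσ₂ : Fin o → Finset (Fin k)),
        IsNC ρ₁ → IsNC ρ₂ → InD π Bf σ₁ Bσ₁ → InD π Bf σ₂ Bσ₂ →
        (∀ i j, τ.r i j ↔ GlueRel ρ₁ σ₁ Bσ₁ i j) →
        (∀ i j, τ.r i j ↔ GlueRel ρ₂ σ₂ Bσ₂ i j) →
        ρ₁ = ρ₂ ∧ σ₁ = σ₂) ∧
    (∀ τ : Setoid (Fin k), IsNC τ → π ≤ τ →
        ∃ (ρ : Setoid (Fin o)) (σ : Setoid (Fin k)) (Bσ : Fin o → Finset (Fin k)),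
          IsNC ρ ∧ InD π Bf σ Bσ ∧ ∀ i j, τ.r i j ↔ GlueRel ρ σ Bσ i j) := by
  refine ⟨fun ρ σ Bσ hρ ⟨hσ, hπσ, hE, _⟩ => ?_,
    fun _ _ _ _ _ _ _ _ _ hD₁ hD₂ h₁ h₂ => glue_injective hπ hBf hD₁ hD₂ h₁ h₂,
    fun _ hτ hπτ => exists_glueRel_eq hπ hBf hτ hπτ⟩
  exact ⟨glue ρ σ Bσ hE, fun _ _ => Iff.rfl, isNC_glue hρ hσ hE, le_glue hπσ hE⟩

/-- `f(ρ, σ)` is a noncrossing partition `≥ π`, and `f : NC(o) × D → {τ ∈ NC(k) : τ ≥ π}`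
is a bijection. -/
theorem glue_bijection
    (k o : ℕ) (hk : 1 ≤ k) (π : Setoid (Fin k)) (hπ : IsNC π)
    (Bf : Fin o → Finset (Fin k)) (hBf : ClassEnum (IsOuterClass π) Bf) :
    (∀ (ρ : Setoid (Fin o)) (σ : Setoid (Fin k)) (Bσ : Fin o → Finset (Fin k)),
        IsNC ρ → InD π Bf σ Bσ →
        ∃ τ : Setoid (Fin k),
          (∀ i j, τ.r i j ↔ GlueRel ρ σ Bσ i j) ∧ IsNC τ ∧ π ≤ τ) ∧
    (∀ (ρ₁ ρ₂ : Setoid (Fin o)) (σ₁ σ₂ τ : Setoid (Fin k))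
        (Bσ₁ Bσ₂ : Fin o → Finset (Fin k)),
        IsNC ρ₁ → IsNC ρ₂ → InD π Bf σ₁ Bσ₁ → InD π Bf σ₂ Bσ₂ →
        (∀ i j, τ.r i j ↔ GlueRel ρ₁ σ₁ Bσ₁ i j) →
        (∀ i j, τ.r i j ↔ GlueRel ρ₂ σ₂ Bσ₂ i j) →
        ρ₁ = ρ₂ ∧ σ₁ = σ₂) ∧
    (∀ τ : Setoid (Fin k), IsNC τ → π ≤ τ →
        ∃ (ρ : Setoid (Fin o)) (σ : Setoid (Fin k)) (Bσ : Fin o → Finset (Fin k)),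
          IsNC ρ ∧ InD π Bf σ Bσ ∧ ∀ i j, τ.r i j ↔ GlueRel ρ σ Bσ i j) :=
  glue_bijection_general k o π hπ Bf hBf
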